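/- Let Λ be a row-finite k-graph with no sources, let c be a bicharacter of ℤ^k, and let t be a Cuntz–Krieger (Λ, c∘d)-family in a C*-algebra. Let λ ∈ Λ with v := r(λ) ∈ H_Per, let m, m' ∈ Per(Λ), and choose p, q, p', q' ∈ ℕ^k with p − q = m and p' − q' = m'. Define V := Σ_{μ ∈ vΛ^p} t_λ t_λ* t_μ t_{θ_{p,q}(μ)}* and V' := Σ_{η ∈ vΛ^{p'}} t_λ t_λ* t_η t_{θ_{p',q'}(η)}*. Then V V' = c(m,m')·conj(c(m',m))·V' V. -/

import Mathlib

open scoped BigOperators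

/-- A `k`-graph: a countable category with degree functor `d : Λ → ℕ^k`
satisfying the factorisation property.  Composition `comp μ ν` is only
meaningful when `s μ = r ν`. -/
structure KGraph (k : ℕ) where
  Path : Type
  countable : Countable Path
  r : Path → Path
  s : Path → Path
  d : Path → (Fin k → ℕ)
  comp : Path → Path → Path
  d_r : ∀ l, d (r l) = 0
  d_s : ∀ l, d (s l) = 0
  r_of_vertex : ∀ v, d v = 0 → r v = v
  s_of_vertex : ∀ v, d v = 0 → s v = v
  id_comp : ∀ l, comp (r l) l = l
  comp_id : ∀ l, comp l (s l) = l
  r_comp : ∀ μ ν, s μ = r ν → r (comp μ ν) = r μ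
  s_comp : ∀ μ ν, s μ = r ν → s (comp μ ν) = s ν
  d_comp : ∀ μ ν, s μ = r ν → d (comp μ ν) = d μ + d ν
  comp_assoc : ∀ l μ ν, s l = r μ → s μ = r ν →
    comp (comp l μ) ν = comp l (comp μ ν)
  factor : ∀ (l : Path) (m n : Fin k → ℕ), d l = m + n →
    ∃! p : Path × Path, d p.1 = m ∧ d p.2 = n ∧ s p.1 = r p.2 ∧ comp p.1 p.2 = l

namespace KGraph

variable {k : ℕ} (G : KGraph k)

def IsVertex (v : G.Path) : Prop := G.d v = 0

/-- `MCE μ ν = μΛ ∩ νΛ ∩ Λ^{d μ ⊔ d ν}`. -/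
def MCE (μ ν : G.Path) : Set G.Path :=
  {l | G.d l = G.d μ ⊔ G.d ν ∧
      (∃ α, G.s μ = G.r α ∧ G.comp μ α = l) ∧
      (∃ β, G.s ν = G.r β ∧ G.comp ν β = l)}

def FinitelyAligned : Prop := ∀ μ ν : G.Path, (G.MCE μ ν).Finite

/-- `Ext(μ; E) = ⋃_{ν ∈ E} {α : μα ∈ MCE(μ,ν)}`. -/
def Ext (μ : G.Path) (E : Set G.Path) : Set G.Path :=
  {α | G.s μ = G.r α ∧ ∃ ν ∈ E, G.comp μ α ∈ G.MCE μ ν}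

/-- `Ext` computed relative to a sub-`k`-graph with path set `W`. -/
def ExtIn (W : Set G.Path) (μ : G.Path) (E : Set G.Path) : Set G.Path :=
  {α | G.s μ = G.r α ∧ ∃ ν ∈ E, G.comp μ α ∈ G.MCE μ ν ∩ W}

/-- `E` is exhaustive at `v` relative to the sub-`k`-graph with path set `W`. -/
def ExhaustiveIn (W : Set G.Path) (v : G.Path) (E : Set G.Path) : Prop :=
  ∀ l ∈ W, G.r l = v → ∃ μ ∈ E, (G.MCE l μ ∩ W).Nonempty

def Exhaustive (v : G.Path) (E : Set G.Path) : Prop := G.ExhaustiveIn Set.univ v E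

/-- Membership in `FE` of the sub-`k`-graph with path set `W`. -/
def IsFEIn (W : Set G.Path) (E : Set G.Path) : Prop :=
  E.Finite ∧ E ⊆ W ∧ (∀ μ ∈ E, ¬ G.IsVertex μ) ∧
    ∃ v, G.IsVertex v ∧ (∀ μ ∈ E, G.r μ = v) ∧ G.ExhaustiveIn W v E

def IsFE (E : Set G.Path) : Prop := G.IsFEIn Set.univ E

/-- A satiated collection of finite exhaustive sets, relative to the sub-`k`-graph `W`. -/
def SatiatedIn (W : Set G.Path) (Ε : Set (Set G.Path)) : Prop :=
  (∀ E ∈ Ε, G.IsFEIn W E) ∧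
  ∀ F ∈ Ε, ∀ v, G.IsVertex v → (∀ μ ∈ F, G.r μ = v) →
    ((∀ l ∈ W, G.r l = v → l ≠ v → insert l F ∈ Ε) ∧
     (∀ l ∈ W, G.r l = v →
        (¬ ∃ μ ∈ F, ∃ μ', G.s μ = G.r μ' ∧ G.comp μ μ' = l) →
        G.ExtIn W l F ∈ Ε) ∧
     (∀ lam lam', lam ∈ F → G.s lam = G.r lam' → G.comp lam lam' ∈ F →
        lam' ≠ G.s lam → F \ {G.comp lam lam'} ∈ Ε) ∧
     (∀ lam ∈ F, ∀ Gs ∈ Ε, (∀ μ ∈ Gs, G.r μ = G.s lam) →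
        ((F \ {lam}) ∪ (G.comp lam) '' Gs) ∈ Ε))

def Satiated (Ε : Set (Set G.Path)) : Prop := G.SatiatedIn Set.univ Ε

end KGraph

/-- A normalised `𝕋`-valued categorical `2`-cocycle on a `k`-graph, with the
circle realised as the norm-one complex numbers. -/
structure KGraph.Cocycle {k : ℕ} (G : KGraph k) where
  c : G.Path → G.Path → ℂ
  norm_one : ∀ μ ν, G.s μ = G.r ν → ‖c μ ν‖ = 1
  cocycle : ∀ l μ ν, G.s l = G.r μ → G.s μ = G.r ν →
    c l μ * c (G.comp l μ) ν = c μ ν * c l (G.comp μ ν)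
  left_id : ∀ l, c (G.r l) l = 1
  right_id : ∀ l, c l (G.s l) = 1

namespace KGraph

variable {k : ℕ} (G : KGraph k)

section CStar

variable {A : Type*} [NonUnitalNormedRing A] [StarRing A] [CStarRing A]
  [NormedSpace ℂ A] [IsScalarTower ℂ A A] [SMulCommClass ℂ A A]
  [StarModule ℂ A] [CompleteSpace A]

/-- Toeplitz–Cuntz–Krieger `(Λ, c)`-family. -/
def IsTCK (σ : G.Cocycle) (t : G.Path → A) : Prop :=
  (∀ v, G.IsVertex v → star (t v) = t v ∧ t v * t v = t v) ∧
  (∀ v w, G.IsVertex v → G.IsVertex w → v ≠ w → t v * t w = 0) ∧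
  (∀ μ ν, G.s μ = G.r ν → t μ * t ν = σ.c μ ν • t (G.comp μ ν)) ∧
  (∀ l, star (t l) * t l = t (G.s l)) ∧
  (∀ μ ν (F : Finset G.Path), (F : Set G.Path) = G.MCE μ ν →
    (t μ * star (t μ)) * (t ν * star (t ν)) = ∑ l ∈ F, t l * star (t l))

open scoped Classical in
/-- `Δ(t)^F = ∏_{l ∈ F} (q_v - q_l)`; the factors commute for a TCK family, so the
`noncommProd` below is the product from the paper.  The product is computed in the
unitization (with a harmless prefactor `q_v`, which acts as the identity on each
factor for a TCK family with `F ⊆ vΛ`), so that the empty product is `q_v`. -/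
noncomputable def Delta (t : G.Path → A) (v : G.Path) (F : Finset G.Path) : A :=
  if h : (F : Set G.Path).Pairwise (Function.onFun Commute fun l =>
      ((t v * star (t v) - t l * star (t l) : A) : Unitization ℂ A))
  then (((t v * star (t v) : A) : Unitization ℂ A) *
      F.noncommProd (fun l => ((t v * star (t v) - t l * star (t l) : A) : Unitization ℂ A)) h).snd
  else 0

/-- Relative Cuntz–Krieger `(Λ, c; Ε)`-family. -/
def IsRelCK (σ : G.Cocycle) (Ε : Set (Set G.Path)) (t : G.Path → A) : Prop :=
  G.IsTCK σ t ∧ ∀ (F : Finset G.Path) (v : G.Path), (F : Set G.Path) ∈ Ε →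
    G.IsVertex v → (∀ μ ∈ F, G.r μ = v) → G.Delta t v F = 0

/-- Cuntz–Krieger `(Λ, c)`-family (finitely aligned case). -/
def IsCK (σ : G.Cocycle) (t : G.Path → A) : Prop :=
  G.IsRelCK σ {E | G.IsFE E} t

/-- The `C*`-subalgebra of `A` generated by a family `t`, as a subset of `A`. -/
def cstarOf (t : G.Path → A) : Set A :=
  closure (↑(NonUnitalStarAlgebra.adjoin ℂ (Set.range t)) : Set A)

end CStar

/-- Row-finite with no sources: every `vΛ^n` is finite and nonempty. -/
def RowFiniteNoSources : Prop :=
  ∀ v, G.IsVertex v → ∀ n : Fin k → ℕ,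
    {l | G.r l = v ∧ G.d l = n}.Finite ∧ {l | G.r l = v ∧ G.d l = n}.Nonempty

section CStar2

variable {A : Type*} [NonUnitalNormedRing A] [StarRing A] [CStarRing A]
  [NormedSpace ℂ A] [IsScalarTower ℂ A A] [SMulCommClass ℂ A A]
  [StarModule ℂ A] [CompleteSpace A]

/-- Cuntz–Krieger family, row-finite no sources formulation:
`∑_{λ ∈ vΛ^n} t_λ t_λ* = t_v`. -/
def IsCKrf (σ : G.Cocycle) (t : G.Path → A) : Prop :=
  G.IsTCK σ t ∧ ∀ v (n : Fin k → ℕ) (F : Finset G.Path), G.IsVertex v →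
    (F : Set G.Path) = {l | G.r l = v ∧ G.d l = n} →
    ∑ l ∈ F, t l * star (t l) = t v

end CStar2

/-- A filter in a `k`-graph. -/
def IsFilter (S : Set G.Path) : Prop :=
  (∀ l, (∃ α, G.s l = G.r α ∧ G.comp l α ∈ S) → l ∈ S) ∧
  (∀ μ ∈ S, ∀ ν ∈ S, (G.MCE μ ν ∩ S).Nonempty)

/-- An ultrafilter: a filter meeting every `Λ^n`. -/
def IsUltrafilter (S : Set G.Path) : Prop :=
  G.IsFilter S ∧ ∀ n : Fin k → ℕ, ∃ l ∈ S, G.d l = n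

/-- `ℓ_μ(S) = {ν : νΛ ∩ μS ≠ ∅}`. -/
def lmap (μ : G.Path) (S : Set G.Path) : Set G.Path :=
  {ν | ∃ τ ∈ S, G.s μ = G.r τ ∧ ∃ α, G.s ν = G.r α ∧ G.comp ν α = G.comp μ τ}

/-- `μ ∼ ν`: `ℓ_μ(S) = ℓ_ν(S)` for every ultrafilter `S` with `r(S) = s(μ)`. -/
def PEquiv (μ ν : G.Path) : Prop :=
  ∀ S, G.IsUltrafilter S → G.s μ ∈ S → G.lmap μ S = G.lmap ν S

/-- `d` with values in `ℤ^k`. -/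
def dZ (l : G.Path) : Fin k → ℤ := fun i => (G.d l i : ℤ)

/-- `Per(Λ) ≤ ℤ^k`, generated by `{d(μ) - d(ν) : μ ∼ ν}`. -/
def PerGroup : AddSubgroup (Fin k → ℤ) :=
  AddSubgroup.closure
    {m | ∃ μ ν, G.s μ = G.s ν ∧ G.PEquiv μ ν ∧ m = G.dZ μ - G.dZ ν}

/-- The hereditary set `H_Per`. -/
def HPer : Set G.Path :=
  {v | G.IsVertex v ∧ ∀ m n : Fin k → ℕ,
    ((fun i => (m i : ℤ)) - fun i => (n i : ℤ)) ∈ G.PerGroup →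
    ∀ l, G.r l = v → G.d l = m →
      ∃ μ, G.r μ = v ∧ G.d μ = n ∧ G.s μ = G.s l ∧ G.PEquiv l μ}

end KGraph
/-!
Write `W = ∑_{μ ∈ vΛ^p} t_μ t_{θ(μ)}^*`. Factorising each path of degree `p + n` as `μτ` with
`d(μ) = p` and using `∑_{τ ∈ s(μ)Λ^n} t_τ t_τ^* = t_{s(μ)}` gives the level-raising identity
`W = c(m, n) ∑_{ν ∈ vΛ^{p+n}} t_ν t_{Θ(ν)}^*`, where `Θ(μτ) = θ(μ)τ`. Raising `W` and `W'` to
matching levels turns both `W W'` and `W' W` into scalar multiples of sums over `vΛ^{p+p'}` of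
`t_ν t_{ρ(ν)}^*`, with `ρ` a composite of extended `θ`-maps. Either composite sends `ν` to the
unique path of degree `q + q'` that is `∼ ν`, so the two products differ only by the scalar
`c(m, m') conj(c(m', m))`, computed from the bicharacter identities. Finally `t_λ t_λ^*` commutes
with `W`, because `λ` is an initial segment of `ν` if and only if it is one of every `ν' ∼ ν` of
large enough degree.
-/

lemma Complex.conj_mul_eq_one_of_norm_eq_one {z : ℂ} (h : ‖z‖ = 1) :
    (starRingEnd ℂ) z * z = 1 := by
  rw [Complex.conj_mul', h, Complex.ofReal_one, one_pow]

lemma mul_conj_eq_of_add_left {M : Type*} [AddGroup M] {c : M → M → ℂ}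
    (hc_norm : ∀ m n, ‖c m n‖ = 1) (hc_add_left : ∀ m m' n, c (m + m') n = c m n * c m' n)
    (x y n : M) : c x n * starRingEnd ℂ (c y n) = c (x - y) n := by
  have hx := hc_add_left (x - y) y n
  rw [sub_add_cancel] at hx
  rw [hx, mul_assoc, mul_comm (c y n), Complex.conj_mul_eq_one_of_norm_eq_one (hc_norm y n),
    mul_one]

lemma mul_eq_commutator_mul {M : Type*} [Add M] {c : M → M → ℂ} (hc_norm : ∀ m n, ‖c m n‖ = 1)
    (hc_add_right : ∀ m n n', c m (n + n') = c m n * c m n') (m m' q q' : M) :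
    c m (m' + q') * c m' q = (c m m' * starRingEnd ℂ (c m' m)) * (c m' (m + q) * c m q') := by
  rw [hc_add_right, hc_add_right]
  linear_combination (-(c m m' * c m q' * c m' q)) *
    Complex.conj_mul_eq_one_of_norm_eq_one (hc_norm m' m)

namespace KGraph

variable {k : ℕ}

def IsPrefix (G : KGraph k) (μ ρ : G.Path) : Prop :=
  ∃ α, G.s μ = G.r α ∧ G.comp μ α = ρ

/-- `vΛ^a`. -/
def level (G : KGraph k) (v : G.Path) (a : Fin k → ℕ) : Set G.Path :=
  {l | G.r l = v ∧ G.d l = a}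

def IsThetaMap (G : KGraph k) (v : G.Path) (a b : Fin k → ℕ) (th : G.Path → G.Path) : Prop :=
  ∀ μ ∈ G.level v a,
    G.r (th μ) = v ∧ G.d (th μ) = b ∧ G.s (th μ) = G.s μ ∧ G.PEquiv μ (th μ)

open Classical in
/-- `Θ(μτ) = th(μ)τ` whenever `d(μ) = a`. -/
noncomputable def thetaExtend (G : KGraph k) (th : G.Path → G.Path) (a : Fin k → ℕ)
    (ν : G.Path) : G.Path :=
  if h : ∃ xy : G.Path × G.Path, G.d xy.1 = a ∧ G.s xy.1 = G.r xy.2 ∧ G.comp xy.1 xy.2 = ν then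
    G.comp (th h.choose.1) h.choose.2
  else ν

def thetaSum {G : KGraph k} {A : Type*} [NonUnitalNonAssocSemiring A] [Star A]
    (t : G.Path → A) (th : G.Path → G.Path) (F : Finset G.Path) : A :=
  ∑ μ ∈ F, t μ * star (t (th μ))

variable {G : KGraph k}

lemma isVertex_s (l : G.Path) : G.IsVertex (G.s l) := G.d_s l

lemma isVertex_r (l : G.Path) : G.IsVertex (G.r l) := G.d_r l

lemma IsVertex.r_eq {v : G.Path} (h : G.IsVertex v) : G.r v = v := G.r_of_vertex v h

lemma IsVertex.s_eq {v : G.Path} (h : G.IsVertex v) : G.s v = v := G.s_of_vertex v h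

lemma d_eq_of_d_comp {x y : G.Path} (hs : G.s x = G.r y) {a n : Fin k → ℕ} (hx : G.d x = a)
    (h : G.d (G.comp x y) = a + n) : G.d y = n := by
  rw [G.d_comp x y hs, hx] at h
  exact add_left_cancel h

lemma exists_isPrefix_of_le (ρ : G.Path) {a : Fin k → ℕ} (h : a ≤ G.d ρ) :
    ∃ x, G.d x = a ∧ G.IsPrefix x ρ := by
  obtain ⟨⟨x, y⟩, ⟨hx, -, hs, hxy⟩, -⟩ := G.factor ρ a (G.d ρ - a) (add_tsub_cancel_of_le h).symm
  exact ⟨x, hx, y, hs, hxy⟩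

lemma factor_unique {x y x' y' : G.Path} (hd : G.d x = G.d x')
    (hs : G.s x = G.r y) (hs' : G.s x' = G.r y')
    (h : G.comp x y = G.comp x' y') : x = x' ∧ y = y' := by
  have hdy : G.d y' = G.d y := d_eq_of_d_comp hs' hd.symm (by rw [← h, G.d_comp x y hs])
  obtain ⟨_, _, huniq⟩ := G.factor (G.comp x y) (G.d x) (G.d y) (G.d_comp x y hs)
  have e : (x, y) = (x', y') :=
    (huniq (x, y) ⟨rfl, rfl, hs, rfl⟩).trans (huniq (x', y') ⟨hd.symm, hdy, hs', h.symm⟩).symm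
  exact Prod.ext_iff.mp e

lemma isPrefix_refl (μ : G.Path) : G.IsPrefix μ μ :=
  ⟨G.s μ, (isVertex_s μ).r_eq.symm, G.comp_id μ⟩

lemma isPrefix_comp {μ α : G.Path} (h : G.s μ = G.r α) : G.IsPrefix μ (G.comp μ α) := ⟨α, h, rfl⟩

lemma IsPrefix.trans {μ ν ρ : G.Path} (h₁ : G.IsPrefix μ ν) (h₂ : G.IsPrefix ν ρ) :
    G.IsPrefix μ ρ := by
  obtain ⟨α, hα, rfl⟩ := h₁
  obtain ⟨β, hβ, rfl⟩ := h₂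
  rw [G.s_comp μ α hα] at hβ
  exact ⟨G.comp α β, by rw [G.r_comp α β hβ, hα], (G.comp_assoc μ α β hα hβ).symm⟩

lemma IsPrefix.comp_left {τ μ ρ : G.Path} (hτ : G.s τ = G.r μ) (h : G.IsPrefix μ ρ) :
    G.IsPrefix (G.comp τ μ) (G.comp τ ρ) := by
  obtain ⟨α, hα, rfl⟩ := h
  exact ⟨α, by rw [G.s_comp τ μ hτ, hα], G.comp_assoc τ μ α hτ hα⟩

lemma IsPrefix.r_eq {μ ρ : G.Path} (h : G.IsPrefix μ ρ) : G.r ρ = G.r μ := by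
  obtain ⟨α, hα, rfl⟩ := h
  exact G.r_comp μ α hα

lemma IsPrefix.d_le {μ ρ : G.Path} (h : G.IsPrefix μ ρ) : G.d μ ≤ G.d ρ := by
  obtain ⟨α, hα, rfl⟩ := h
  rw [G.d_comp μ α hα]
  exact le_self_add

lemma IsPrefix.eq_of_d_le {μ ρ : G.Path} (h : G.IsPrefix μ ρ) (hd : G.d ρ ≤ G.d μ) : ρ = μ := by
  obtain ⟨α, hα, rfl⟩ := h
  have hαv : G.IsVertex α :=
    d_eq_of_d_comp hα rfl ((le_antisymm hd (isPrefix_comp hα).d_le).trans (add_zero _).symm)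
  rw [← hαv.r_eq, ← hα, G.comp_id]

lemma IsPrefix.of_d_le {μ ν ρ : G.Path} (hμ : G.IsPrefix μ ρ) (hν : G.IsPrefix ν ρ)
    (hd : G.d μ ≤ G.d ν) : G.IsPrefix μ ν := by
  obtain ⟨x, hx, y, hxy, rfl⟩ := exists_isPrefix_of_le ν hd
  obtain ⟨α, hα, hμα⟩ := hμ
  obtain ⟨γ, hγ, rfl⟩ := hν
  rw [G.s_comp x y hxy] at hγ
  have hxyγ : G.s x = G.r (G.comp y γ) := by rw [G.r_comp y γ hγ, hxy]
  have hx_eq := (factor_unique hx.symm hα hxyγ (by rw [hμα, G.comp_assoc x y γ hxy hγ])).1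
  rw [hx_eq]
  exact isPrefix_comp hxy

lemma exists_mem_mce_isPrefix {μ ν ρ : G.Path} (hμ : G.IsPrefix μ ρ) (hν : G.IsPrefix ν ρ) :
    ∃ x ∈ G.MCE μ ν, G.IsPrefix x ρ := by
  obtain ⟨x, hx, hxρ⟩ := exists_isPrefix_of_le ρ (sup_le hμ.d_le hν.d_le)
  exact ⟨x, ⟨hx, hμ.of_d_le hxρ (hx ▸ le_sup_left), hν.of_d_le hxρ (hx ▸ le_sup_right)⟩, hxρ⟩

lemma mce_eq_empty_of_not_isPrefix {μ ν : G.Path} (hd : G.d μ ≤ G.d ν)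
    (h : ¬ G.IsPrefix μ ν) : G.MCE μ ν = ∅ := by
  refine Set.eq_empty_of_forall_notMem fun x ⟨hx, hμx, (hνx : G.IsPrefix ν x)⟩ => h ?_
  rwa [← hνx.eq_of_d_le (by rw [hx, sup_eq_right.mpr hd])]

lemma IsFilter.r_eq_of_mem {S : Set G.Path} (hS : G.IsFilter S) {w : G.Path}
    (hw : G.IsVertex w) (hwS : w ∈ S) {x : G.Path} (hx : x ∈ S) : G.r x = w := by
  obtain ⟨ρ, ⟨hρ, (hwρ : G.IsPrefix w ρ), (hxρ : G.IsPrefix x ρ)⟩, -⟩ := hS.2 w hwS x hx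
  have hρx : ρ = x := hxρ.eq_of_d_le (by rw [hρ, hw]; exact sup_le zero_le le_rfl)
  rw [← hρx, hwρ.r_eq, hw.r_eq]

lemma isUltrafilter_setOf_isPrefix {z : ℕ → G.Path} (hz : ∀ j, G.IsPrefix (z j) (z (j + 1)))
    (hd : ∀ n, ∃ j, n ≤ G.d (z j)) : G.IsUltrafilter {ν | ∃ j, G.IsPrefix ν (z j)} := by
  have hmono : ∀ i j, i ≤ j → G.IsPrefix (z i) (z j) := fun i =>
    Nat.le_induction (isPrefix_refl (z i)) fun j _ hij => hij.trans (hz j)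
  refine ⟨⟨?_, ?_⟩, ?_⟩
  · rintro l ⟨α, hα, j, hj⟩
    exact ⟨j, (isPrefix_comp hα).trans hj⟩
  · rintro μ ⟨i, hi⟩ ν ⟨j, hj⟩
    obtain ⟨x, hx, hxz⟩ := exists_mem_mce_isPrefix (hi.trans (hmono i _ (le_max_left i j)))
      (hj.trans (hmono j _ (le_max_right i j)))
    exact ⟨x, hx, _, hxz⟩
  · intro n
    obtain ⟨j, hj⟩ := hd n
    obtain ⟨x, hx, hxz⟩ := exists_isPrefix_of_le (z j) hj
    exact ⟨x, ⟨j, hxz⟩, hx⟩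

lemma exists_isUltrafilter_mem (hrf : G.RowFiniteNoSources) {w : G.Path} (hw : G.IsVertex w) :
    ∃ S, G.IsUltrafilter S ∧ w ∈ S := by
  choose e he using fun x : G.Path => (hrf (G.s x) (isVertex_s x) 1).2
  let z : ℕ → G.Path := fun j => Nat.rec w (fun _ x => G.comp x (e x)) j
  have hz : ∀ j, G.IsPrefix (z j) (z (j + 1)) := fun j => isPrefix_comp (he (z j)).1.symm
  have hzd : ∀ j, G.d (z j) = fun _ => j := by
    intro j
    induction j with
    | zero => exact hw
    | succ j ih =>
      change G.d (G.comp (z j) (e (z j))) = _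
      rw [G.d_comp _ _ (he (z j)).1.symm, ih, (he (z j)).2]
      rfl
  refine ⟨_, isUltrafilter_setOf_isPrefix hz fun n => ⟨Finset.univ.sup n, ?_⟩, 0, isPrefix_refl w⟩
  rw [hzd]
  exact fun i => Finset.le_sup (Finset.mem_univ i)

lemma IsUltrafilter.lmap {S : Set G.Path} (hS : G.IsUltrafilter S) {τ : G.Path}
    (hτS : G.s τ ∈ S) : G.IsUltrafilter (G.lmap τ S) := by
  have hr : ∀ x ∈ S, G.s τ = G.r x := fun x hx =>
    (hS.1.r_eq_of_mem (isVertex_s τ) hτS hx).symm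
  refine ⟨⟨?_, ?_⟩, ?_⟩
  · rintro l ⟨α, hα, τ₁, hτ₁S, hττ₁, hl⟩
    exact ⟨τ₁, hτ₁S, hττ₁, (isPrefix_comp hα).trans hl⟩
  · rintro ν₁ ⟨τ₁, hτ₁S, hττ₁, hν₁⟩ ν₂ ⟨τ₂, hτ₂S, hττ₂, hν₂⟩
    obtain ⟨ρ, ⟨-, (h₁ : G.IsPrefix τ₁ ρ), (h₂ : G.IsPrefix τ₂ ρ)⟩, hρS⟩ :=
      hS.1.2 τ₁ hτ₁S τ₂ hτ₂S
    obtain ⟨x, hx, hxρ⟩ := exists_mem_mce_isPrefix (IsPrefix.trans hν₁ (h₁.comp_left hττ₁))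
      (IsPrefix.trans hν₂ (h₂.comp_left hττ₂))
    exact ⟨x, hx, ρ, hρS, hr ρ hρS, hxρ⟩
  · intro n
    obtain ⟨τ₀, hτ₀S, hτ₀⟩ := hS.2 ((n ⊔ G.d τ) - G.d τ)
    have hn : n ≤ G.d (G.comp τ τ₀) := by
      rw [G.d_comp τ τ₀ (hr τ₀ hτ₀S), hτ₀, add_tsub_cancel_of_le le_sup_right]
      exact le_sup_left
    obtain ⟨x, hx, hxτ⟩ := exists_isPrefix_of_le _ hn
    exact ⟨x, ⟨τ₀, hτ₀S, hr τ₀ hτ₀S, hxτ⟩, hx⟩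

lemma r_mem_lmap {S : Set G.Path} {τ : G.Path} (hτS : G.s τ ∈ S) : G.r τ ∈ G.lmap τ S :=
  ⟨G.s τ, hτS, (isVertex_s τ).r_eq.symm, τ, (isVertex_r τ).s_eq, by rw [G.id_comp, G.comp_id]⟩

lemma lmap_comp {μ τ : G.Path} (hμτ : G.s μ = G.r τ) (S : Set G.Path) :
    G.lmap (G.comp μ τ) S = G.lmap μ (G.lmap τ S) := by
  ext x
  constructor
  · rintro ⟨τ₁, hτ₁S, hτ₁, hx⟩
    rw [G.s_comp μ τ hμτ] at hτ₁
    refine ⟨G.comp τ τ₁, ⟨τ₁, hτ₁S, hτ₁, isPrefix_refl _⟩, by rw [G.r_comp τ τ₁ hτ₁, hμτ], ?_⟩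
    rwa [← G.comp_assoc μ τ τ₁ hμτ hτ₁]
  · rintro ⟨ρ, ⟨τ₁, hτ₁S, hτ₁, hρ⟩, hμρ, hx⟩
    refine ⟨τ₁, hτ₁S, by rw [G.s_comp μ τ hμτ, hτ₁], ?_⟩
    rw [G.comp_assoc μ τ τ₁ hμτ hτ₁]
    exact IsPrefix.trans hx (IsPrefix.comp_left hμρ hρ)

lemma PEquiv.symm {μ ν : G.Path} (h : G.PEquiv μ ν) (hs : G.s μ = G.s ν) : G.PEquiv ν μ :=
  fun S hS hν => (h S hS (hs ▸ hν)).symm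

lemma PEquiv.trans {μ ν ρ : G.Path} (h₁ : G.PEquiv μ ν) (h₂ : G.PEquiv ν ρ)
    (hs : G.s μ = G.s ν) : G.PEquiv μ ρ :=
  fun S hS hμ => (h₁ S hS hμ).trans (h₂ S hS (hs ▸ hμ))

lemma PEquiv.comp_right {μ ν τ : G.Path} (h : G.PEquiv μ ν) (hs : G.s μ = G.s ν)
    (hμτ : G.s μ = G.r τ) : G.PEquiv (G.comp μ τ) (G.comp ν τ) := by
  intro S hS hτS
  rw [G.s_comp μ τ hμτ] at hτS
  rw [lmap_comp hμτ, lmap_comp (hs ▸ hμτ)]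
  exact h _ (hS.lmap hτS) (hμτ ▸ r_mem_lmap hτS)

lemma PEquiv.isPrefix (hrf : G.RowFiniteNoSources) {ν ν' lam : G.Path} (h : G.PEquiv ν ν')
    (hlam : G.IsPrefix lam ν) (hd : G.d lam ≤ G.d ν') : G.IsPrefix lam ν' := by
  obtain ⟨S, hS, hνS⟩ := exists_isUltrafilter_mem hrf (isVertex_s ν)
  have hmem : lam ∈ G.lmap ν S := ⟨G.s ν, hνS, (isVertex_s ν).r_eq.symm, by rwa [G.comp_id]⟩
  obtain ⟨τ, -, hν'τ, hlamτ⟩ := h S hS hνS ▸ hmem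
  exact IsPrefix.of_d_le hlamτ (isPrefix_comp hν'τ) hd

lemma PEquiv.eq_of_d_eq (hrf : G.RowFiniteNoSources) {ν ν' : G.Path} (h : G.PEquiv ν ν')
    (hd : G.d ν = G.d ν') : ν = ν' :=
  ((h.isPrefix hrf (isPrefix_refl ν) hd.le).eq_of_d_le hd.ge).symm

lemma exists_finset_coe_eq_level (hrf : G.RowFiniteNoSources) {v : G.Path} (hv : G.IsVertex v)
    (a : Fin k → ℕ) : ∃ F : Finset G.Path, (F : Set G.Path) = G.level v a :=
  (hrf v hv a).1.exists_finset_coe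

lemma mem_iff_of_coe_eq_level {F : Finset G.Path} {v : G.Path} {a : Fin k → ℕ}
    (hF : (F : Set G.Path) = G.level v a) {l : G.Path} : l ∈ F ↔ G.r l = v ∧ G.d l = a :=
  Set.ext_iff.mp hF l

lemma dZ_eq_of_d_eq {l : G.Path} {a : Fin k → ℕ} (h : G.d l = a) :
    G.dZ l = fun i => (a i : ℤ) := by
  subst h
  rfl

lemma IsThetaMap.comp {v : G.Path} {a b e : Fin k → ℕ} {th₁ th₂ : G.Path → G.Path}
    (h₁ : G.IsThetaMap v a b th₁) (h₂ : G.IsThetaMap v b e th₂) :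
    G.IsThetaMap v a e (th₂ ∘ th₁) := by
  intro μ hμ
  obtain ⟨hr₁, hd₁, hs₁, he₁⟩ := h₁ μ hμ
  obtain ⟨hr₂, hd₂, hs₂, he₂⟩ := h₂ (th₁ μ) ⟨hr₁, hd₁⟩
  exact ⟨hr₂, hd₂, hs₂.trans hs₁, he₁.trans he₂ hs₁.symm⟩

lemma IsThetaMap.apply_eq (hrf : G.RowFiniteNoSources) {v : G.Path} {a b : Fin k → ℕ}
    {th₁ th₂ : G.Path → G.Path} (h₁ : G.IsThetaMap v a b th₁) (h₂ : G.IsThetaMap v a b th₂)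
    {μ : G.Path} (hμ : μ ∈ G.level v a) : th₁ μ = th₂ μ := by
  obtain ⟨-, hd₁, hs₁, he₁⟩ := h₁ μ hμ
  obtain ⟨-, hd₂, -, he₂⟩ := h₂ μ hμ
  exact ((he₁.symm hs₁.symm).trans he₂ hs₁).eq_of_d_eq hrf (hd₁.trans hd₂.symm)

lemma thetaExtend_comp (th : G.Path → G.Path) {a : Fin k → ℕ} {μ τ : G.Path}
    (hμ : G.d μ = a) (hs : G.s μ = G.r τ) :
    G.thetaExtend th a (G.comp μ τ) = G.comp (th μ) τ := by
  have hex : ∃ xy : G.Path × G.Path,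
      G.d xy.1 = a ∧ G.s xy.1 = G.r xy.2 ∧ G.comp xy.1 xy.2 = G.comp μ τ :=
    ⟨(μ, τ), hμ, hs, rfl⟩
  obtain ⟨h₁, h₂, h₃⟩ := hex.choose_spec
  obtain ⟨hx, hy⟩ := factor_unique (h₁.trans hμ.symm) h₂ hs h₃
  rw [thetaExtend, dif_pos hex, hx, hy]

lemma IsThetaMap.thetaExtend {v : G.Path} {a b : Fin k → ℕ} {th : G.Path → G.Path}
    (hth : G.IsThetaMap v a b th) (n : Fin k → ℕ) :
    G.IsThetaMap v (a + n) (b + n) (G.thetaExtend th a) := by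
  rintro ν ⟨hν, hdν⟩
  obtain ⟨x, hx, y, hxy, rfl⟩ := exists_isPrefix_of_le ν (le_self_add.trans_eq hdν.symm)
  obtain ⟨hr, hd, hs, he⟩ := hth x ⟨(isPrefix_comp hxy).r_eq.symm.trans hν, hx⟩
  have hθxy : G.s (th x) = G.r y := hs.trans hxy
  rw [thetaExtend_comp th hx hxy, G.r_comp _ y hθxy, G.d_comp _ y hθxy, G.s_comp _ y hθxy,
    G.s_comp x y hxy, hd, d_eq_of_d_comp hxy hx hdν]
  exact ⟨hr, rfl, rfl, he.comp_right hs.symm hxy⟩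

lemma sum_level_add_eq_sum_sum_comp {M : Type*} [AddCommMonoid M] {v : G.Path}
    {a n : Fin k → ℕ} {Fa Fan : Finset G.Path} {Fs : G.Path → Finset G.Path}
    (hFa : (Fa : Set G.Path) = G.level v a) (hFan : (Fan : Set G.Path) = G.level v (a + n))
    (hFs : ∀ μ, (Fs μ : Set G.Path) = G.level (G.s μ) n) (f : G.Path → M) :
    ∑ ν ∈ Fan, f ν = ∑ μ ∈ Fa, ∑ τ ∈ Fs μ, f (G.comp μ τ) := by
  rw [Finset.sum_sigma']
  symm
  refine Finset.sum_bij (fun x _ => G.comp x.1 x.2) ?_ ?_ ?_ fun _ _ => rfl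
  · rintro ⟨μ, τ⟩ hμτ
    obtain ⟨hμ, hτ⟩ := Finset.mem_sigma.mp hμτ
    obtain ⟨hrμ, hdμ⟩ := (mem_iff_of_coe_eq_level hFa).mp hμ
    obtain ⟨hrτ, hdτ⟩ := (mem_iff_of_coe_eq_level (hFs μ)).mp hτ
    exact (mem_iff_of_coe_eq_level hFan).mpr
      ⟨(G.r_comp μ τ hrτ.symm).trans hrμ, by rw [G.d_comp μ τ hrτ.symm, hdμ, hdτ]⟩
  · rintro ⟨μ, τ⟩ hμτ ⟨μ', τ'⟩ hμτ' h
    obtain ⟨hμ, hτ⟩ := Finset.mem_sigma.mp hμτ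
    obtain ⟨hμ', hτ'⟩ := Finset.mem_sigma.mp hμτ'
    obtain ⟨rfl, rfl⟩ := factor_unique
      (((mem_iff_of_coe_eq_level hFa).mp hμ).2.trans ((mem_iff_of_coe_eq_level hFa).mp hμ').2.symm)
      ((mem_iff_of_coe_eq_level (hFs μ)).mp hτ).1.symm
      ((mem_iff_of_coe_eq_level (hFs μ')).mp hτ').1.symm h
    rfl
  · intro ν hν
    obtain ⟨hrν, hdν⟩ := (mem_iff_of_coe_eq_level hFan).mp hν
    obtain ⟨x, hx, y, hxy, rfl⟩ := exists_isPrefix_of_le ν (le_self_add.trans_eq hdν.symm)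
    refine ⟨⟨x, y⟩, Finset.mem_sigma.mpr ⟨?_, ?_⟩, rfl⟩
    · exact (mem_iff_of_coe_eq_level hFa).mpr ⟨(isPrefix_comp hxy).r_eq.symm.trans hrν, hx⟩
    · exact (mem_iff_of_coe_eq_level (hFs x)).mpr ⟨hxy.symm, d_eq_of_d_comp hxy hx hdν⟩

section CuntzKrieger

variable {A : Type*} [NonUnitalNormedRing A] [StarRing A] [NormedSpace ℂ A]
  {σ : G.Cocycle} {t : G.Path → A}

lemma IsTCK.mul_eq (h : G.IsTCK σ t) {μ ν : G.Path} (hs : G.s μ = G.r ν) :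
    t μ * t ν = σ.c μ ν • t (G.comp μ ν) := h.2.2.1 μ ν hs

lemma IsTCK.star_mul_self (h : G.IsTCK σ t) (μ : G.Path) : star (t μ) * t μ = t (G.s μ) :=
  h.2.2.2.1 μ

lemma IsTCK.mul_t_s (h : G.IsTCK σ t) (μ : G.Path) : t μ * t (G.s μ) = t μ := by
  rw [h.mul_eq (isVertex_s μ).r_eq.symm, G.comp_id, σ.right_id, one_smul]

lemma IsTCK.t_s_mul_star (h : G.IsTCK σ t) (μ : G.Path) : t (G.s μ) * star (t μ) = star (t μ) := by
  rw [← (h.1 _ (isVertex_s μ)).1, ← star_mul, h.mul_t_s]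

lemma IsTCK.star_mul_eq_zero_of_mce_eq_empty (h : G.IsTCK σ t) {μ ν : G.Path}
    (hmce : G.MCE μ ν = ∅) : star (t μ) * t ν = 0 := by
  have hqq : (t μ * star (t μ)) * (t ν * star (t ν)) = 0 := by
    simpa using h.2.2.2.2 μ ν ∅ (by rw [hmce, Finset.coe_empty])
  calc star (t μ) * t ν
      = star (t μ) * ((t μ * star (t μ)) * (t ν * star (t ν))) * t ν := by
        simp only [← mul_assoc, h.star_mul_self, h.t_s_mul_star]
        simp only [mul_assoc, h.star_mul_self, h.mul_t_s]
    _ = 0 := by rw [hqq, mul_zero, zero_mul]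

lemma IsTCK.star_mul_eq_zero_of_ne (h : G.IsTCK σ t) {μ ν : G.Path} (hd : G.d μ = G.d ν)
    (hne : μ ≠ ν) : star (t μ) * t ν = 0 :=
  h.star_mul_eq_zero_of_mce_eq_empty <| mce_eq_empty_of_not_isPrefix hd.le
    fun hμν => hne (hμν.eq_of_d_le hd.ge).symm

lemma IsTCK.t_comp (h : G.IsTCK σ t) {μ ν : G.Path} (hs : G.s μ = G.r ν) :
    t (G.comp μ ν) = starRingEnd ℂ (σ.c μ ν) • (t μ * t ν) := by
  rw [h.mul_eq hs, smul_smul, Complex.conj_mul_eq_one_of_norm_eq_one (σ.norm_one μ ν hs), one_smul]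

lemma IsTCK.proj_mul_of_not_isPrefix (h : G.IsTCK σ t) {lam ν : G.Path} (hd : G.d lam ≤ G.d ν)
    (hν : ¬ G.IsPrefix lam ν) : (t lam * star (t lam)) * t ν = 0 := by
  rw [mul_assoc, h.star_mul_eq_zero_of_mce_eq_empty (mce_eq_empty_of_not_isPrefix hd hν), mul_zero]

lemma thetaSum_mul_thetaSum (hck : G.IsTCK σ t) {v : G.Path} {a b e : Fin k → ℕ}
    {th₁ th₂ : G.Path → G.Path} (h₁ : G.IsThetaMap v a b th₁) (h₂ : G.IsThetaMap v b e th₂)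
    {Fa Fb : Finset G.Path} (hFa : (Fa : Set G.Path) = G.level v a)
    (hFb : (Fb : Set G.Path) = G.level v b) :
    thetaSum t th₁ Fa * thetaSum t th₂ Fb = thetaSum t (th₂ ∘ th₁) Fa := by
  rw [thetaSum, thetaSum, thetaSum, Finset.sum_mul]
  refine Finset.sum_congr rfl fun μ hμ => ?_
  obtain ⟨hr₁, hd₁, -, -⟩ := h₁ μ ((mem_iff_of_coe_eq_level hFa).mp hμ)
  obtain ⟨-, -, hs₂, -⟩ := h₂ (th₁ μ) ⟨hr₁, hd₁⟩
  rw [Finset.mul_sum,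
    Finset.sum_eq_single_of_mem (th₁ μ) ((mem_iff_of_coe_eq_level hFb).mpr ⟨hr₁, hd₁⟩)]
  · rw [mul_assoc, ← mul_assoc (star _), hck.star_mul_self, ← hs₂, hck.t_s_mul_star]
    rfl
  · intro ξ hξ hne
    rw [mul_assoc, ← mul_assoc (star _), hck.star_mul_eq_zero_of_ne
      (hd₁.trans ((mem_iff_of_coe_eq_level hFb).mp hξ).2.symm) (Ne.symm hne), zero_mul, mul_zero]

variable [SMulCommClass ℂ A A]

lemma IsTCK.proj_mul_of_isPrefix (h : G.IsTCK σ t) {lam ν : G.Path} (hν : G.IsPrefix lam ν) :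
    (t lam * star (t lam)) * t ν = t ν := by
  obtain ⟨β, hβ, rfl⟩ := hν
  rw [h.t_comp hβ, mul_smul_comm, mul_assoc, ← mul_assoc (star (t lam)), h.star_mul_self,
    ← mul_assoc, h.mul_t_s]

/-- The projection `q_λ` fixes or kills `t_ν` and `t_{ν'}` simultaneously. -/
lemma IsTCK.commute_proj_of_pequiv (hrf : G.RowFiniteNoSources) (h : G.IsTCK σ t)
    {lam ν ν' : G.Path} (hνν' : G.PEquiv ν ν') (hs : G.s ν = G.s ν')
    (hd : G.d lam ≤ G.d ν) (hd' : G.d lam ≤ G.d ν') :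
    Commute (t lam * star (t lam)) (t ν * star (t ν')) := by
  have hq_star : star (t lam * star (t lam)) = t lam * star (t lam) := by
    rw [star_mul, star_star]
  by_cases hν : G.IsPrefix lam ν
  · have hν' := hνν'.isPrefix hrf hν hd'
    have hR : star (t ν') * (t lam * star (t lam)) = star (t ν') := by
      rw [← hq_star, ← star_mul, h.proj_mul_of_isPrefix hν']
    rw [Commute, SemiconjBy, ← mul_assoc, h.proj_mul_of_isPrefix hν, mul_assoc, hR]
  · have hν' : ¬ G.IsPrefix lam ν' := fun hν' => hν ((hνν'.symm hs).isPrefix hrf hν' hd)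
    have hR : star (t ν') * (t lam * star (t lam)) = 0 := by
      rw [← hq_star, ← star_mul, h.proj_mul_of_not_isPrefix hd' hν', star_zero]
    rw [Commute, SemiconjBy, ← mul_assoc, h.proj_mul_of_not_isPrefix hd hν, zero_mul, mul_assoc,
      hR, mul_zero]

variable [IsScalarTower ℂ A A] [StarModule ℂ A] {c : (Fin k → ℤ) → (Fin k → ℤ) → ℂ}

lemma IsTCK.t_mul_proj_mul_star (h : G.IsTCK σ t) {μ μ' τ : G.Path} (hμ : G.s μ = G.r τ)
    (hμ' : G.s μ' = G.r τ) :
    t μ * (t τ * star (t τ)) * star (t μ') =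
      (σ.c μ τ * starRingEnd ℂ (σ.c μ' τ)) • (t (G.comp μ τ) * star (t (G.comp μ' τ))) := by
  rw [← mul_assoc, mul_assoc, ← star_mul, h.mul_eq hμ, h.mul_eq hμ', star_smul, smul_mul_smul_comm]
  rfl

lemma thetaSum_eq_smul_thetaSum_thetaExtend (hrf : G.RowFiniteNoSources) (hck : G.IsCKrf σ t)
    (hσ : ∀ μ ν : G.Path, σ.c μ ν = c (G.dZ μ) (G.dZ ν))
    (hc_norm : ∀ m n : Fin k → ℤ, ‖c m n‖ = 1)
    (hc_add_left : ∀ m m' n : Fin k → ℤ, c (m + m') n = c m n * c m' n)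
    {v : G.Path} {a b : Fin k → ℕ} (n : Fin k → ℕ) {th : G.Path → G.Path}
    (hth : G.IsThetaMap v a b th) {Fa Fan : Finset G.Path}
    (hFa : (Fa : Set G.Path) = G.level v a) (hFan : (Fan : Set G.Path) = G.level v (a + n)) :
    thetaSum t th Fa = c ((fun i => (a i : ℤ)) - fun i => (b i : ℤ)) (fun i => (n i : ℤ)) •
      thetaSum t (G.thetaExtend th a) Fan := by
  choose Fs hFs using fun μ : G.Path => exists_finset_coe_eq_level hrf (isVertex_s μ) n
  rw [thetaSum, thetaSum, sum_level_add_eq_sum_sum_comp hFa hFan hFs, Finset.smul_sum]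
  refine Finset.sum_congr rfl fun μ hμ => ?_
  obtain ⟨hrμ, hdμ⟩ := (mem_iff_of_coe_eq_level hFa).mp hμ
  obtain ⟨-, hdθ, hsθ, -⟩ := hth μ ⟨hrμ, hdμ⟩
  calc t μ * star (t (th μ))
      = ∑ τ ∈ Fs μ, t μ * (t τ * star (t τ)) * star (t (th μ)) := by
        rw [← Finset.sum_mul, ← Finset.mul_sum, hck.2 (G.s μ) n (Fs μ) (isVertex_s μ) (hFs μ),
          hck.1.mul_t_s]
    _ = _ := by
      rw [Finset.smul_sum]
      refine Finset.sum_congr rfl fun τ hτ => ?_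
      obtain ⟨hrτ, hdτ⟩ := (mem_iff_of_coe_eq_level (hFs μ)).mp hτ
      rw [thetaExtend_comp th hdμ hrτ.symm, hck.1.t_mul_proj_mul_star hrτ.symm (hsθ.trans hrτ.symm),
        hσ, hσ, dZ_eq_of_d_eq hdμ, dZ_eq_of_d_eq hdθ, dZ_eq_of_d_eq hdτ,
        mul_conj_eq_of_add_left hc_norm hc_add_left]

lemma commute_proj_thetaSum (hrf : G.RowFiniteNoSources) (hck : G.IsCKrf σ t)
    (hσ : ∀ μ ν : G.Path, σ.c μ ν = c (G.dZ μ) (G.dZ ν))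
    (hc_norm : ∀ m n : Fin k → ℤ, ‖c m n‖ = 1)
    (hc_add_left : ∀ m m' n : Fin k → ℤ, c (m + m') n = c m n * c m' n)
    {v : G.Path} (hv : G.IsVertex v) {a b : Fin k → ℕ} {th : G.Path → G.Path}
    (hth : G.IsThetaMap v a b th) {Fa : Finset G.Path} (hFa : (Fa : Set G.Path) = G.level v a)
    (lam : G.Path) : Commute (t lam * star (t lam)) (thetaSum t th Fa) := by
  obtain ⟨Fan, hFan⟩ := exists_finset_coe_eq_level hrf hv (a + G.d lam)
  rw [thetaSum_eq_smul_thetaSum_thetaExtend hrf hck hσ hc_norm hc_add_left _ hth hFa hFan]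
  refine (Commute.sum_right _ _ _ fun ν hν => ?_).smul_right _
  obtain ⟨hrν, hdν⟩ := (mem_iff_of_coe_eq_level hFan).mp hν
  obtain ⟨-, hdΘ, hsΘ, hΘ⟩ := hth.thetaExtend (G.d lam) ν ⟨hrν, hdν⟩
  exact hck.1.commute_proj_of_pequiv hrf hΘ hsΘ.symm (le_add_self.trans_eq hdν.symm)
    (le_add_self.trans_eq hdΘ.symm)

lemma thetaSum_mul_thetaSum_comm (hrf : G.RowFiniteNoSources) (hck : G.IsCKrf σ t)
    (hσ : ∀ μ ν : G.Path, σ.c μ ν = c (G.dZ μ) (G.dZ ν))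
    (hc_norm : ∀ m n : Fin k → ℤ, ‖c m n‖ = 1)
    (hc_add_left : ∀ m m' n : Fin k → ℤ, c (m + m') n = c m n * c m' n)
    (hc_add_right : ∀ m n n' : Fin k → ℤ, c m (n + n') = c m n * c m n')
    {v : G.Path} (hv : G.IsVertex v) {m m' : Fin k → ℤ} {p q p' q' : Fin k → ℕ}
    (hpq : (fun i => (p i : ℤ)) - (fun i => (q i : ℤ)) = m)
    (hpq' : (fun i => (p' i : ℤ)) - (fun i => (q' i : ℤ)) = m')
    {θ θ' : G.Path → G.Path} (hθ : G.IsThetaMap v p q θ) (hθ' : G.IsThetaMap v p' q' θ')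
    {F F' : Finset G.Path} (hF : (F : Set G.Path) = G.level v p)
    (hF' : (F' : Set G.Path) = G.level v p') :
    thetaSum t θ F * thetaSum t θ' F' =
      (c m m' * starRingEnd ℂ (c m' m)) • (thetaSum t θ' F' * thetaSum t θ F) := by
  obtain ⟨Fpp', hFpp'⟩ := exists_finset_coe_eq_level hrf hv (p + p')
  obtain ⟨Fqp', hFqp'⟩ := exists_finset_coe_eq_level hrf hv (q + p')
  obtain ⟨Fq'p, hFq'p⟩ := exists_finset_coe_eq_level hrf hv (q' + p)
  set Θ := G.thetaExtend θ p
  set Θ' := G.thetaExtend θ' p'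
  have hW₁ := thetaSum_eq_smul_thetaSum_thetaExtend hrf hck hσ hc_norm hc_add_left p' hθ hF hFpp'
  have hW₂ := thetaSum_eq_smul_thetaSum_thetaExtend hrf hck hσ hc_norm hc_add_left q' hθ hF
    (add_comm p q' ▸ hFq'p)
  have hW'₁ := thetaSum_eq_smul_thetaSum_thetaExtend hrf hck hσ hc_norm hc_add_left q hθ' hF'
    (add_comm p' q ▸ hFqp')
  have hW'₂ := thetaSum_eq_smul_thetaSum_thetaExtend hrf hck hσ hc_norm hc_add_left p hθ' hF'
    (add_comm p' p ▸ hFpp')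
  rw [hpq] at hW₁ hW₂
  rw [hpq'] at hW'₁ hW'₂
  have hΘ'₁ : G.IsThetaMap v (q + p') (q' + q) Θ' := add_comm p' q ▸ hθ'.thetaExtend q
  have hΘ₂ : G.IsThetaMap v (q' + p) (q + q') Θ := add_comm p q' ▸ hθ.thetaExtend q'
  have hΘΘ' : G.IsThetaMap v (p + p') (q' + q) (Θ ∘ Θ') := by
    rw [add_comm p p', add_comm q' q]
    exact (hθ'.thetaExtend p).comp hΘ₂
  have hcomm : thetaSum t (Θ' ∘ Θ) Fpp' = thetaSum t (Θ ∘ Θ') Fpp' :=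
    Finset.sum_congr rfl fun ν hν => by
      rw [((hθ.thetaExtend p').comp hΘ'₁).apply_eq hrf hΘΘ' ((mem_iff_of_coe_eq_level hFpp').mp hν)]
  have hp : (fun i => (p i : ℤ)) = m + fun i => (q i : ℤ) := eq_add_of_sub_eq hpq
  have hp' : (fun i => (p' i : ℤ)) = m' + fun i => (q' i : ℤ) := eq_add_of_sub_eq hpq'
  calc thetaSum t θ F * thetaSum t θ' F'
      = (c m (fun i => (p' i : ℤ)) * c m' (fun i => (q i : ℤ))) • thetaSum t (Θ' ∘ Θ) Fpp' := by
        rw [hW₁, hW'₁, smul_mul_smul_comm,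
          thetaSum_mul_thetaSum hck.1 (hθ.thetaExtend p') hΘ'₁ hFpp' hFqp']
    _ = (c m m' * starRingEnd ℂ (c m' m)) •
          ((c m' (fun i => (p i : ℤ)) * c m (fun i => (q' i : ℤ))) •
            thetaSum t (Θ ∘ Θ') Fpp') := by
        rw [hcomm, smul_smul, hp', hp, mul_eq_commutator_mul hc_norm hc_add_right]
    _ = (c m m' * starRingEnd ℂ (c m' m)) • (thetaSum t θ' F' * thetaSum t θ F) := by
        rw [hW'₂, hW₂, smul_mul_smul_comm,
          thetaSum_mul_thetaSum hck.1 (hθ'.thetaExtend p) hΘ₂ (add_comm p' p ▸ hFpp') hFq'p]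

end CuntzKrieger

end KGraph

theorem stmt18_general {k : ℕ} (G : KGraph k) (hrf : G.RowFiniteNoSources)
    (c : (Fin k → ℤ) → (Fin k → ℤ) → ℂ)
    (hc_norm : ∀ m n : Fin k → ℤ, ‖c m n‖ = 1)
    (hc_add_left : ∀ m m' n : Fin k → ℤ, c (m + m') n = c m n * c m' n)
    (hc_add_right : ∀ m n n' : Fin k → ℤ, c m (n + n') = c m n * c m n')
    (σ : G.Cocycle) (hσ : ∀ μ ν : G.Path, σ.c μ ν = c (G.dZ μ) (G.dZ ν))
    {A : Type*} [NonUnitalNormedRing A] [StarRing A]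
    [NormedSpace ℂ A] [IsScalarTower ℂ A A] [SMulCommClass ℂ A A]
    [StarModule ℂ A]
    (t : G.Path → A) (ht : G.IsCKrf σ t)
    (lam : G.Path) (hv : G.r lam ∈ G.HPer)
    (m m' : Fin k → ℤ)
    (p q p' q' : Fin k → ℕ)
    (hpq : (fun i => (p i : ℤ)) - (fun i => (q i : ℤ)) = m)
    (hpq' : (fun i => (p' i : ℤ)) - (fun i => (q' i : ℤ)) = m')
    (θ θ' : G.Path → G.Path)
    (hθ : ∀ μ : G.Path, G.r μ = G.r lam → G.d μ = p →
      G.r (θ μ) = G.r lam ∧ G.d (θ μ) = q ∧ G.s (θ μ) = G.s μ ∧ G.PEquiv μ (θ μ))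
    (hθ' : ∀ μ : G.Path, G.r μ = G.r lam → G.d μ = p' →
      G.r (θ' μ) = G.r lam ∧ G.d (θ' μ) = q' ∧ G.s (θ' μ) = G.s μ ∧ G.PEquiv μ (θ' μ))
    (F F' : Finset G.Path)
    (hF : (F : Set G.Path) = {μ | G.r μ = G.r lam ∧ G.d μ = p})
    (hF' : (F' : Set G.Path) = {μ | G.r μ = G.r lam ∧ G.d μ = p'}) :
    ∀ V V' : A,
      V = ∑ μ ∈ F, t lam * star (t lam) * (t μ * star (t (θ μ))) →
      V' = ∑ η ∈ F', t lam * star (t lam) * (t η * star (t (θ' η))) →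
      V * V' = (c m m' * starRingEnd ℂ (c m' m)) • (V' * V) := by
  intro V V' hV hV'
  have hθ_map : G.IsThetaMap (G.r lam) p q θ := fun μ hμ => hθ μ hμ.1 hμ.2
  have hθ'_map : G.IsThetaMap (G.r lam) p' q' θ' := fun μ hμ => hθ' μ hμ.1 hμ.2
  set Q := t lam * star (t lam)
  set W := KGraph.thetaSum t θ F
  set W' := KGraph.thetaSum t θ' F'
  have hV_eq : V = Q * W := hV.trans (Finset.mul_sum _ _ _).symm
  have hV'_eq : V' = Q * W' := hV'.trans (Finset.mul_sum _ _ _).symm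
  have hQ := KGraph.commute_proj_thetaSum hrf ht hσ hc_norm hc_add_left hv.1 hθ_map hF lam
  have hQ' := KGraph.commute_proj_thetaSum hrf ht hσ hc_norm hc_add_left hv.1 hθ'_map hF' lam
  have hVV' : V * V' = Q * (Q * (W * W')) := by rw [hV_eq, hV'_eq, mul_assoc, hQ.symm.left_comm]
  have hV'V : V' * V = Q * (Q * (W' * W)) := by rw [hV_eq, hV'_eq, mul_assoc, hQ'.symm.left_comm]
  rw [hVV', hV'V, KGraph.thetaSum_mul_thetaSum_comm hrf ht hσ hc_norm hc_add_left hc_add_right hv.1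
    hpq hpq' hθ_map hθ'_map hF hF', mul_smul_comm, mul_smul_comm]

/-- the commutation relation `V V' = c(m,m') conj(c(m',m)) V' V` for the
unitaries built from the bijections `θ_{p,q}` and a bicharacter `c` of `ℤ^k`. -/
theorem stmt18 {k : ℕ} (G : KGraph k) (hrf : G.RowFiniteNoSources)
    (c : (Fin k → ℤ) → (Fin k → ℤ) → ℂ)
    (hc_norm : ∀ m n : Fin k → ℤ, ‖c m n‖ = 1)
    (hc_add_left : ∀ m m' n : Fin k → ℤ, c (m + m') n = c m n * c m' n)
    (hc_add_right : ∀ m n n' : Fin k → ℤ, c m (n + n') = c m n * c m n')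
    (σ : G.Cocycle) (hσ : ∀ μ ν : G.Path, σ.c μ ν = c (G.dZ μ) (G.dZ ν))
    {A : Type*} [NonUnitalNormedRing A] [StarRing A] [CStarRing A]
    [NormedSpace ℂ A] [IsScalarTower ℂ A A] [SMulCommClass ℂ A A]
    [StarModule ℂ A] [CompleteSpace A]
    (t : G.Path → A) (ht : G.IsCKrf σ t)
    (lam : G.Path) (hv : G.r lam ∈ G.HPer)
    (m m' : Fin k → ℤ) (hm : m ∈ G.PerGroup) (hm' : m' ∈ G.PerGroup)
    (p q p' q' : Fin k → ℕ)
    (hpq : (fun i => (p i : ℤ)) - (fun i => (q i : ℤ)) = m)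
    (hpq' : (fun i => (p' i : ℤ)) - (fun i => (q' i : ℤ)) = m')
    (θ θ' : G.Path → G.Path)
    (hθ : ∀ μ : G.Path, G.r μ = G.r lam → G.d μ = p →
      G.r (θ μ) = G.r lam ∧ G.d (θ μ) = q ∧ G.s (θ μ) = G.s μ ∧ G.PEquiv μ (θ μ))
    (hθ' : ∀ μ : G.Path, G.r μ = G.r lam → G.d μ = p' →
      G.r (θ' μ) = G.r lam ∧ G.d (θ' μ) = q' ∧ G.s (θ' μ) = G.s μ ∧ G.PEquiv μ (θ' μ))
    (F F' : Finset G.Path)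
    (hF : (F : Set G.Path) = {μ | G.r μ = G.r lam ∧ G.d μ = p})
    (hF' : (F' : Set G.Path) = {μ | G.r μ = G.r lam ∧ G.d μ = p'}) :
    ∀ V V' : A,
      V = ∑ μ ∈ F, t lam * star (t lam) * (t μ * star (t (θ μ))) →
      V' = ∑ η ∈ F', t lam * star (t lam) * (t η * star (t (θ' η))) →
      V * V' = (c m m' * starRingEnd ℂ (c m' m)) • (V' * V) :=
  stmt18_general G hrf c hc_norm hc_add_left hc_add_right σ hσ t ht lam hv m m' p q p' q' hpq hpq' θ
    θ' hθ hθ' F F' hF hF'
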